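/- arXiv:1910.06832 — 3 statements merged into one kernel-verified Lean document; each statement's English description precedes it below -/
import Mathlib

section
/- Let μ and ν be probability measures on ℝⁿ (with the Euclidean norm), let T : ℝⁿ → ℝⁿ be measurable, and let π be the deterministic coupling given by the pushforward of ν under the map y ↦ (T y, y). Assume the first marginal of π is μ. Let D : ℝⁿ → ℝ be 1-Lipschitz and integrable with respect to both μ and ν, assume the strong duality identity ∫ ‖T y − y‖ dν(y) = ∫ D dμ − ∫ D dν holds, and assume ∫ ‖T y − y‖ dν(y) > 0. Then: (a) there exist points x ≠ y with D(x) − D(y) = ‖x − y‖, so the Lipschitz constant of D is exactly 1; (b) for ν-almost every y, the point T(y) minimizes the function x ↦ ‖x − y‖ − D(x) over ℝⁿ, with minimum value −D(y); (c) the pushforward of ν under T equals μ. -/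
open MeasureTheory

theorem stmt_0 {n : ℕ}
    (μ ν : Measure (EuclideanSpace ℝ (Fin n)))
    [IsProbabilityMeasure μ] [IsProbabilityMeasure ν]
    (T : EuclideanSpace ℝ (Fin n) → EuclideanSpace ℝ (Fin n))
    (hT : Measurable T)
    (π : Measure (EuclideanSpace ℝ (Fin n) × EuclideanSpace ℝ (Fin n)))
    (hπ : π = ν.map (fun y => (T y, y)))
    (hfst : π.map Prod.fst = μ)
    (D : EuclideanSpace ℝ (Fin n) → ℝ)
    (hD : LipschitzWith 1 D)
    (hDμ : Integrable D μ) (hDν : Integrable D ν)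
    (hdual : ∫ y, ‖T y - y‖ ∂ν = ∫ x, D x ∂μ - ∫ y, D y ∂ν)
    (hpos : 0 < ∫ y, ‖T y - y‖ ∂ν) :
    ((∃ x y, x ≠ y ∧ D x - D y = ‖x - y‖) ∧
      sSup {r : ℝ | ∃ x y, x ≠ y ∧ r = |D x - D y| / ‖x - y‖} = 1) ∧
    (∀ᵐ y ∂ν, (∀ x, ‖T y - y‖ - D (T y) ≤ ‖x - y‖ - D x) ∧
      ‖T y - y‖ - D (T y) = -D y) ∧
    ν.map T = μ := by
  -- basic Lipschitz estimate
  have hkey : ∀ x y : EuclideanSpace ℝ (Fin n), |D x - D y| ≤ ‖x - y‖ := by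
    intro x y
    have := hD.dist_le_mul x y
    simpa [Real.dist_eq, dist_eq_norm] using this
  -- map fact
  have hmeas : Measurable (fun y : EuclideanSpace ℝ (Fin n) => (T y, y)) :=
    hT.prodMk measurable_id
  have hmapT : ν.map T = μ := by
    rw [hπ, Measure.map_map measurable_fst hmeas] at hfst
    exact hfst
  -- integrability of D ∘ T
  have hDT : Integrable (fun y => D (T y)) ν := by
    have h1 : Integrable D (ν.map T) := hmapT ▸ hDμ
    exact (integrable_map_measure hD.continuous.aestronglyMeasurable
      hT.aemeasurable).mp h1
  -- integral transfer
  have hint : ∫ x, D x ∂μ = ∫ y, D (T y) ∂ν := by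
    rw [← hmapT, integral_map hT.aemeasurable hD.continuous.aestronglyMeasurable]
  -- integrability of the cost
  have hNint : Integrable (fun y => ‖T y - y‖) ν := by
    by_contra h
    rw [integral_undef h] at hpos
    exact lt_irrefl 0 hpos
  -- the gap function
  set g : EuclideanSpace ℝ (Fin n) → ℝ := fun y => ‖T y - y‖ - (D (T y) - D y) with hg
  have hgint : Integrable g ν := (hNint.sub (hDT.sub hDν))
  have hgnn : 0 ≤ g := by
    intro y
    have := hkey (T y) y
    have h2 : D (T y) - D y ≤ ‖T y - y‖ := (abs_le.mp this).2.trans_eq rfl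
    simp only [hg, Pi.zero_apply]
    linarith
  have hgzero : ∫ y, g y ∂ν = 0 := by
    have h1 : ∫ y, g y ∂ν = (∫ y, ‖T y - y‖ ∂ν) - ∫ y, (D (T y) - D y) ∂ν :=
      integral_sub hNint (hDT.sub hDν)
    have h2 : ∫ y, (D (T y) - D y) ∂ν = (∫ y, D (T y) ∂ν) - ∫ y, D y ∂ν :=
      integral_sub hDT hDν
    rw [h1, h2, hdual, hint]
    ring
  have hae : ∀ᵐ y ∂ν, g y = 0 := by
    have := (integral_eq_zero_iff_of_nonneg hgnn hgint).mp hgzero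
    filter_upwards [this] with y hy using hy
  have haeq : ∀ᵐ y ∂ν, ‖T y - y‖ = D (T y) - D y := by
    filter_upwards [hae] with y hy
    simp only [hg] at hy
    linarith
  -- existence of a point with T y ≠ y and equality
  have hA : ν {y | T y ≠ y} ≠ 0 := by
    intro h0
    have hz : (fun y => ‖T y - y‖) =ᵐ[ν] (fun _ => 0) := by
      rw [Filter.EventuallyEq, ae_iff]
      convert h0 using 2
      ext y
      simp [sub_ne_zero]
    rw [integral_congr_ae hz] at hpos
    simp at hpos
  obtain ⟨y₀, hy₀ne, hy₀eq⟩ : ∃ y, T y ≠ y ∧ ‖T y - y‖ = D (T y) - D y := by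
    by_contra h
    push_neg at h
    have hsub : {y | T y ≠ y} ⊆ {y | ¬ ‖T y - y‖ = D (T y) - D y} := by
      intro y hy
      exact h y hy
    have hnull : ν {y | ¬ ‖T y - y‖ = D (T y) - D y} = 0 := by
      have h' := haeq
      rw [ae_iff] at h'
      exact h'
    exact hA (measure_mono_null hsub hnull)
  have hnorm0 : ‖T y₀ - y₀‖ ≠ 0 := by
    simp [sub_eq_zero, hy₀ne]
  refine ⟨⟨⟨T y₀, y₀, hy₀ne, hy₀eq.symm⟩, ?_⟩, ?_, hmapT⟩
  · -- sSup = 1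
    apply le_antisymm
    · apply csSup_le
      · exact ⟨1, T y₀, y₀, hy₀ne, by
          rw [← hy₀eq, abs_norm, div_self hnorm0]⟩
      · rintro r ⟨x, y, hxy, rfl⟩
        have hn : 0 < ‖x - y‖ := by
          rw [norm_pos_iff]
          exact sub_ne_zero.mpr hxy
        exact (div_le_one hn).mpr (hkey x y)
    · apply le_csSup
      · exact ⟨1, by
          rintro r ⟨x, y, hxy, rfl⟩
          have hn : 0 < ‖x - y‖ := by
            rw [norm_pos_iff]
            exact sub_ne_zero.mpr hxy
          exact (div_le_one hn).mpr (hkey x y)⟩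
      · exact ⟨T y₀, y₀, hy₀ne, by
          rw [← hy₀eq, abs_norm, div_self hnorm0]⟩
  · filter_upwards [haeq] with y hy
    constructor
    · intro x
      have h1 : D x - D y ≤ ‖x - y‖ := (abs_le.mp (hkey x y)).2.trans_eq rfl
      have : ‖T y - y‖ - D (T y) = -D y := by rw [hy]; ring
      linarith
    · rw [hy]; ring
end

section
/- Let μ and ν be probability measures on ℝⁿ, let π be a coupling of μ and ν, and let D : ℝⁿ → ℝ be 1-Lipschitz and integrable with respect to both μ and ν. Assume (x, y) ↦ ‖x − y‖ is integrable with respect to π, that ∫ ‖x − y‖ dπ(x, y) = ∫ D dμ − ∫ D dν, and that ∫ ‖x − y‖ dπ(x, y) > 0. Then there exist points x ≠ y in ℝⁿ with D(x) − D(y) = ‖x − y‖; consequently sup_{x ≠ y} |D(x) − D(y)| / ‖x − y‖ = 1, i.e., the Lipschitz norm of D equals 1. -/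
open MeasureTheory

theorem stmt_6 {n : ℕ}
    (μ ν : Measure (EuclideanSpace ℝ (Fin n)))
    [IsProbabilityMeasure μ] [IsProbabilityMeasure ν]
    (π : Measure (EuclideanSpace ℝ (Fin n) × EuclideanSpace ℝ (Fin n)))
    [IsProbabilityMeasure π]
    (hfst : π.map Prod.fst = μ) (hsnd : π.map Prod.snd = ν)
    (D : EuclideanSpace ℝ (Fin n) → ℝ)
    (hD : LipschitzWith 1 D)
    (hDμ : Integrable D μ) (hDν : Integrable D ν)
    (hcost : Integrable (fun p => ‖p.1 - p.2‖) π)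
    (hdual : ∫ p, ‖p.1 - p.2‖ ∂π = ∫ x, D x ∂μ - ∫ y, D y ∂ν)
    (hpos : 0 < ∫ p, ‖p.1 - p.2‖ ∂π) :
    (∃ x y : EuclideanSpace ℝ (Fin n), x ≠ y ∧ D x - D y = ‖x - y‖) ∧
    sSup {r : ℝ | ∃ x y : EuclideanSpace ℝ (Fin n), x ≠ y ∧ r = |D x - D y| / ‖x - y‖} = 1 := by
  have hDc : Continuous D := hD.continuous
  have habs : ∀ x y : EuclideanSpace ℝ (Fin n), |D x - D y| ≤ ‖x - y‖ := by
    intro x y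
    have := hD.dist_le_mul x y
    simpa [Real.dist_eq, dist_eq_norm] using this
  have hfst' : ∫ x, D x ∂μ = ∫ p, D p.1 ∂π := by
    rw [← hfst, integral_map measurable_fst.aemeasurable hDc.aestronglyMeasurable]
  have hsnd' : ∫ y, D y ∂ν = ∫ p, D p.2 ∂π := by
    rw [← hsnd, integral_map measurable_snd.aemeasurable hDc.aestronglyMeasurable]
  have hint1 : Integrable (fun p => D p.1) π := by
    have h := hDμ; rw [← hfst] at h
    exact (integrable_map_measure hDc.aestronglyMeasurable measurable_fst.aemeasurable).mp h
  have hint2 : Integrable (fun p => D p.2) π := by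
    have h := hDν; rw [← hsnd] at h
    exact (integrable_map_measure hDc.aestronglyMeasurable measurable_snd.aemeasurable).mp h
  set g : EuclideanSpace ℝ (Fin n) × EuclideanSpace ℝ (Fin n) → ℝ :=
    fun p => ‖p.1 - p.2‖ - (D p.1 - D p.2) with hg
  have hint12 : Integrable (fun p => D p.1 - D p.2) π := hint1.sub hint2
  have hgint : Integrable g π := hcost.sub hint12
  have hgnn : ∀ p, 0 ≤ g p := by
    intro p
    have := (abs_le.mp (habs p.1 p.2)).2
    simp only [hg]
    linarith
  have hgzero : ∫ p, g p ∂π = 0 := by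
    simp only [hg]
    rw [integral_sub hcost hint12, integral_sub hint1 hint2,
      ← hfst', ← hsnd', hdual]
    ring
  have hae : ∀ᵐ p ∂π, g p = 0 := by
    have h := (integral_eq_zero_iff_of_nonneg hgnn hgint).mp hgzero
    filter_upwards [h] with p hp using hp
  have hex : ∃ p : EuclideanSpace ℝ (Fin n) × EuclideanSpace ℝ (Fin n),
      p.1 ≠ p.2 ∧ g p = 0 := by
    by_contra hcon
    push_neg at hcon
    have hae2 : ∀ᵐ p ∂π, ‖p.1 - p.2‖ = 0 := by
      filter_upwards [hae] with p hp
      by_cases hpe : p.1 = p.2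
      · simp [hpe]
      · exact absurd hp (hcon p hpe)
    have : ∫ p, ‖p.1 - p.2‖ ∂π = 0 := by
      rw [integral_eq_zero_iff_of_nonneg (fun p => norm_nonneg _) hcost]
      filter_upwards [hae2] with p hp using hp
    linarith
  obtain ⟨p, hne, hgz⟩ := hex
  have heq : D p.1 - D p.2 = ‖p.1 - p.2‖ := by
    simp only [hg] at hgz; linarith
  refine ⟨⟨p.1, p.2, hne, heq⟩, ?_⟩
  have hnorm_pos : 0 < ‖p.1 - p.2‖ := by
    rw [norm_pos_iff]
    exact sub_ne_zero_of_ne hne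
  have hmem : (1 : ℝ) ∈ {r : ℝ | ∃ x y : EuclideanSpace ℝ (Fin n),
      x ≠ y ∧ r = |D x - D y| / ‖x - y‖} := by
    refine ⟨p.1, p.2, hne, ?_⟩
    rw [heq, abs_of_nonneg (norm_nonneg _), div_self hnorm_pos.ne']
  have hub : ∀ r ∈ {r : ℝ | ∃ x y : EuclideanSpace ℝ (Fin n),
      x ≠ y ∧ r = |D x - D y| / ‖x - y‖}, r ≤ 1 := by
    rintro r ⟨x, y, hxy, rfl⟩
    have hpos' : 0 < ‖x - y‖ := by
      rw [norm_pos_iff]; exact sub_ne_zero_of_ne hxy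
    rw [div_le_one hpos']
    exact habs x y
  exact le_antisymm (csSup_le ⟨1, hmem⟩ hub) (le_csSup ⟨1, hub⟩ hmem)
end

section
/- Let ν be a probability measure on ℝⁿ, T : ℝⁿ → ℝⁿ a measurable map with y ↦ ‖T y − y‖ integrable with respect to ν, and D : ℝⁿ → ℝ a 1-Lipschitz function integrable with respect to both ν and the pushforward of ν under T. Assume the strong duality identity ∫ ‖T y − y‖ dν(y) = ∫ D(T y) dν(y) − ∫ D(y) dν(y). Then for ν-almost every y and for every x ∈ ℝⁿ, ‖T(y) − y‖ − D(T(y)) ≤ ‖x − y‖ − D(x); that is, T(y) is a global minimizer of the function x ↦ ‖x − y‖ − D(x), with minimum value −D(y). -/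
open MeasureTheory

theorem stmt_8 {n : ℕ}
    (ν : Measure (EuclideanSpace ℝ (Fin n))) [IsProbabilityMeasure ν]
    (T : EuclideanSpace ℝ (Fin n) → EuclideanSpace ℝ (Fin n))
    (hT : Measurable T)
    (hcost : Integrable (fun y => ‖T y - y‖) ν)
    (D : EuclideanSpace ℝ (Fin n) → ℝ)
    (hD : LipschitzWith 1 D)
    (hDν : Integrable D ν) (hDTν : Integrable D (ν.map T))
    (hdual : ∫ y, ‖T y - y‖ ∂ν = ∫ y, D (T y) ∂ν - ∫ y, D y ∂ν) :
    ∀ᵐ y ∂ν, (∀ x, ‖T y - y‖ - D (T y) ≤ ‖x - y‖ - D x) ∧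
      ‖T y - y‖ - D (T y) = -D y := by
  have hDT : Integrable (fun y => D (T y)) ν := by
    rwa [integrable_map_measure hD.continuous.aestronglyMeasurable hT.aemeasurable] at hDTν
  have hf : Integrable (fun y => ‖T y - y‖ - D (T y) + D y) ν :=
    (hcost.sub hDT).add hDν
  have hnn : 0 ≤ᵐ[ν] fun y => ‖T y - y‖ - D (T y) + D y := by
    refine Filter.Eventually.of_forall fun y => ?_
    simp only [Pi.zero_apply]
    have := hD.dist_le_mul (T y) y
    simp only [NNReal.coe_one, one_mul, Real.dist_eq, dist_eq_norm] at this
    have h2 := abs_le.mp this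
    linarith [h2.2]
  have hzero : ∫ y, (‖T y - y‖ - D (T y) + D y) ∂ν = 0 := by
    rw [integral_add (f := fun y => ‖T y - y‖ - D (T y)) (hcost.sub hDT) hDν,
      integral_sub hcost hDT]
    linarith [hdual]
  have hae : (fun y => ‖T y - y‖ - D (T y) + D y) =ᵐ[ν] 0 :=
    (integral_eq_zero_iff_of_nonneg_ae hnn hf).mp hzero
  filter_upwards [hae] with y hy
  have hy0 : ‖T y - y‖ - D (T y) + D y = 0 := hy
  constructor
  · intro x
    have := hD.dist_le_mul x y
    simp only [NNReal.coe_one, one_mul, Real.dist_eq, dist_eq_norm] at this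
    have h2 := abs_le.mp this
    linarith [h2.1]
  · linarith
end
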